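/- For every n×n×n tensor A : Fin n → Fin n → Fin n → ℝ there exists an n²×n²×n² tensor B : Fin (n^2) → Fin (n^2) → Fin (n^2) → ℝ such that every entry of B is either 0 or equal to some entry of A (for all x y z, B x y z = 0 or there exist i j k with B x y z = A i j k), and per(B) = Per(A), where per(B) = ∑ over pairs of permutations α, β ∈ Equiv.Perm (Fin (n^2)) of ∏_{x : Fin (n^2)} B x (α x) (β x). -/

import Mathlib

/-- A family `π : Fin n → Equiv.Perm (Fin n)` is discordant if
`π k i ≠ π l i` for all `k ≠ l` and all `i`. -/
def Discordant {n : ℕ} (π : Fin n → Equiv.Perm (Fin n)) : Prop :=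
  ∀ k l, k ≠ l → ∀ i, π k i ≠ π l i

instance {n : ℕ} : DecidablePred (Discordant (n := n)) := fun _ =>
  inferInstanceAs (Decidable (∀ _ _, _ → ∀ _, _))

/-- The 2-permanent of an `n × n × n` tensor. -/
noncomputable def Per2 {n : ℕ} (A : Fin n → Fin n → Fin n → ℝ) : ℝ :=
  ∑ π ∈ Finset.univ.filter (fun π : Fin n → Equiv.Perm (Fin n) => Discordant π),
    ∏ k : Fin n, ∏ i : Fin n, A i (π k i) k

/-- The 1-permanent of an `m × m × m` tensor. -/
noncomputable def per3 {m : ℕ} (B : Fin m → Fin m → Fin m → ℝ) : ℝ :=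
  ∑ α : Equiv.Perm (Fin m), ∑ β : Equiv.Perm (Fin m), ∏ x : Fin m, B x (α x) (β x)

/-!
Index the big tensor by pairs `(i, k)` and place `A i j k` at `((i, k), (j, k), (i, j))`.
A pair of permutations `(α, β)` then contributes a nonzero term only if
`α (i, k) = (π k i, k)` and `β (i, k) = (i, π k i)` for some family `π`; such a `β` is a
bijection exactly when `π` is discordant, and the term is then the term of `π` in `Per2 A`.
-/

open Finset Equiv

section TensorPermanent

variable {ι κ R : Type*} [Fintype ι] [DecidableEq ι] [Fintype κ] [DecidableEq κ]
  [CommSemiring R]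

def tensorPer (T : ι → ι → ι → R) : R :=
  ∑ α : Perm ι, ∑ β : Perm ι, ∏ x, T x (α x) (β x)

theorem tensorPer_comp_equiv (e : κ ≃ ι) (T : ι → ι → ι → R) :
    tensorPer (fun x y z => T (e x) (e y) (e z)) = tensorPer T := by
  refine Fintype.sum_equiv (permCongr e) _ _ fun α => ?_
  refine Fintype.sum_equiv (permCongr e) _ _ fun β => ?_
  exact Fintype.prod_equiv e _ _ fun x => by simp [permCongr_apply]

end TensorPermanent

section FiberPerm

variable {ι κ : Type*} [Finite ι]

noncomputable def fiberPerm (α : Perm (ι × κ)) (hα : ∀ p, (α p).2 = p.2) (k : κ) : Perm ι :=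
  ofBijective (fun i => (α (i, k)).1) <| Finite.injective_iff_bijective.mp fun i i' h =>
    congrArg Prod.fst <| α.injective <| Prod.ext h <| by rw [hα, hα]

@[simp]
theorem fiberPerm_apply (α : Perm (ι × κ)) (hα : ∀ p, (α p).2 = p.2) (k : κ) (i : ι) :
    fiberPerm α hα k i = (α (i, k)).1 := rfl

theorem prodCongrLeft_fiberPerm (α : Perm (ι × κ)) (hα : ∀ p, (α p).2 = p.2) :
    prodCongrLeft (fiberPerm α hα) = α := by
  ext ⟨i, k⟩ <;> simp [prodCongrLeft_apply, hα]

end FiberPerm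

section Per2Tensor

variable {n : ℕ}

theorem discordant_iff_injective (π : Fin n → Perm (Fin n)) :
    Discordant π ↔ ∀ i, Function.Injective fun k => π k i :=
  ⟨fun h _ _ _ hkl => by_contra fun hne => h _ _ hne _ hkl, fun h _ _ hkl _ hπ => hkl (h _ hπ)⟩

noncomputable def Discordant.graphPerm {π : Fin n → Perm (Fin n)} (h : Discordant π) :
    Perm (Fin n × Fin n) :=
  ofBijective (fun p => (p.1, π p.2 p.1)) <| Finite.injective_iff_bijective.mp
    fun ⟨i, k⟩ ⟨i', k'⟩ hp => by
      obtain ⟨rfl, hπ⟩ := Prod.ext_iff.mp hp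
      simp only [Prod.mk.injEq, true_and]
      exact (discordant_iff_injective π).mp h i hπ

@[simp]
theorem Discordant.graphPerm_apply {π : Fin n → Perm (Fin n)} (h : Discordant π)
    (p : Fin n × Fin n) : h.graphPerm p = (p.1, π p.2 p.1) := rfl

def per2Tensor (A : Fin n → Fin n → Fin n → ℝ) (p q r : Fin n × Fin n) : ℝ :=
  if q.2 = p.2 ∧ r = (p.1, q.1) then A p.1 q.1 p.2 else 0

theorem per2Tensor_eq_zero_or (A : Fin n → Fin n → Fin n → ℝ) (p q r : Fin n × Fin n) :
    per2Tensor A p q r = 0 ∨ ∃ i j k, per2Tensor A p q r = A i j k := by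
  unfold per2Tensor
  split_ifs
  exacts [Or.inr ⟨_, _, _, rfl⟩, Or.inl rfl]

def IsPer2Pair (α β : Perm (Fin n × Fin n)) : Prop :=
  ∀ p, (α p).2 = p.2 ∧ β p = (p.1, (α p).1)

instance (α β : Perm (Fin n × Fin n)) : Decidable (IsPer2Pair α β) :=
  inferInstanceAs (Decidable (∀ _, _))

theorem Discordant.isPer2Pair {π : Fin n → Perm (Fin n)} (h : Discordant π) :
    IsPer2Pair (prodCongrLeft π) h.graphPerm := fun _ => ⟨rfl, rfl⟩

theorem IsPer2Pair.exists_discordant {α β : Perm (Fin n × Fin n)} (h : IsPer2Pair α β) :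
    ∃ (π : Fin n → Perm (Fin n)) (hπ : Discordant π),
      prodCongrLeft π = α ∧ hπ.graphPerm = β := by
  have hα p := (h p).1
  have hβ p := (h p).2
  have hπ : Discordant (fiberPerm α hα) := fun k l hkl i hkli => by
    have : β (i, k) = β (i, l) := by simpa [hβ] using hkli
    exact hkl (Prod.ext_iff.mp (β.injective this)).2
  refine ⟨_, hπ, prodCongrLeft_fiberPerm α hα, ?_⟩
  ext p <;> simp [hβ]

theorem prod_per2Tensor (A : Fin n → Fin n → Fin n → ℝ) (α β : Perm (Fin n × Fin n)) :
    ∏ p, per2Tensor A p (α p) (β p) =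
      if IsPer2Pair α β then ∏ p, A p.1 (α p).1 p.2 else 0 :=
  Fintype.prod_ite_zero

theorem tensorPer_per2Tensor (A : Fin n → Fin n → Fin n → ℝ) :
    tensorPer (per2Tensor A) = Per2 A := by
  have hterms : tensorPer (per2Tensor A) =
      ∑ ab ∈ univ.filter fun ab : Perm (Fin n × Fin n) × Perm (Fin n × Fin n) =>
        IsPer2Pair ab.1 ab.2, ∏ p, A p.1 (ab.1 p).1 p.2 := by
    rw [sum_filter, Fintype.sum_prod_type]
    simp only [tensorPer, prod_per2Tensor]
  rw [hterms, Per2]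
  symm
  refine sum_bij (fun π hπ => (prodCongrLeft π, (mem_filter.mp hπ).2.graphPerm))
    (fun π hπ => by simpa using (mem_filter.mp hπ).2.isPer2Pair) ?_ ?_ ?_
  · intro π _ π' _ heq
    funext k
    refine Equiv.ext fun i => ?_
    simpa [prodCongrLeft_apply] using congrArg (· (i, k)) (Prod.ext_iff.mp heq).1
  · rintro ⟨α, β⟩ hab
    obtain ⟨π, hπ, rfl, rfl⟩ := (mem_filter.mp hab).2.exists_discordant
    exact ⟨π, by simpa using hπ, rfl⟩
  · intro π _
    rw [prod_comm, Fintype.prod_prod_type]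
    rfl

end Per2Tensor

/-- Dow–Gibson: every 2-permanent of an `n × n × n` tensor can be realized as the
1-permanent of an `n² × n² × n²` tensor whose nonzero entries are entries of `A`. -/
theorem Per2_eq_per_of_larger_tensor {n : ℕ} (A : Fin n → Fin n → Fin n → ℝ) :
    ∃ B : Fin (n ^ 2) → Fin (n ^ 2) → Fin (n ^ 2) → ℝ,
      (∀ x y z, B x y z = 0 ∨ ∃ i j k, B x y z = A i j k) ∧
      per3 B = Per2 A := by
  let e : Fin (n ^ 2) ≃ Fin n × Fin n := (finCongr (sq n)).trans finProdFinEquiv.symm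
  exact ⟨fun x y z => per2Tensor A (e x) (e y) (e z),
    fun x y z => per2Tensor_eq_zero_or A _ _ _,
    (tensorPer_comp_equiv e _).trans (tensorPer_per2Tensor A)⟩
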